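/- Let $R$ be a noetherian ring, $I$ an ideal, and $M$ a finitely generated $R$-module. Then the set $\bigcup_{n > 0} \operatorname{Ass}_R(M/I^n M)$ is finite; moreover, for each $n > 0$, $\operatorname{Ass}_R(M/I^n M) \subseteq \bigcup_{i=0}^{n-1} \operatorname{Ass}_R(I^i M/I^{i+1} M)$, and the set $\bigcup_{i \ge 0} \operatorname{Ass}_R(I^i M/I^{i+1} M)$ is finite. -/

import Mathlib

open RingTheory.Sequence

/-- The dimension of a module `M` over `R`: the Krull dimension of `R ⧸ Ann_R(M)`. -/
noncomputable def moduleDim (R M : Type*) [CommRing R] [AddCommGroup M] [Module R M] :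
    WithBot ℕ∞ :=
  ringKrullDim (R ⧸ Module.annihilator R M)

open Classical in
/-- The depth of a module `M` over a local ring `R`: `⊤` if `M = 0`, otherwise the
supremum of lengths of `M`-regular sequences contained in the maximal ideal. -/
noncomputable def moduleDepth (R M : Type*) [CommRing R] [IsLocalRing R]
    [AddCommGroup M] [Module R M] : ℕ∞ :=
  if Subsingleton M then ⊤
  else sSup {n : ℕ∞ | ∃ rs : List R, (rs.length : ℕ∞) = n ∧
    (∀ x ∈ rs, x ∈ IsLocalRing.maximalIdeal R) ∧ RingTheory.Sequence.IsRegular M rs}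

open Classical in
/-- The codepth of a module over a local ring: `⊥` if `M = 0`, else `dim M - depth M`. -/
noncomputable def moduleCodepth (R M : Type*) [CommRing R] [IsLocalRing R]
    [AddCommGroup M] [Module R M] : WithBot ℕ∞ :=
  if Subsingleton M then ⊥
  else ((WithBot.unbotD 0 (moduleDim R M) - moduleDepth R M : ℕ∞) : WithBot ℕ∞)

/-- A localized module `M_𝔭` is Cohen–Macaulay over `R_𝔭`. -/
noncomputable def isCMAt (R M : Type*) [CommRing R] [AddCommGroup M] [Module R M]
    (𝔭 : Ideal R) [𝔭.IsPrime] : Prop :=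
  moduleDim (Localization.AtPrime 𝔭) (LocalizedModule 𝔭.primeCompl M)
    ≤ (moduleDepth (Localization.AtPrime 𝔭) (LocalizedModule 𝔭.primeCompl M) : WithBot ℕ∞)

/-- The Cohen–Macaulay locus of a ring `R`. -/
noncomputable def cmRingLocus (R : Type*) [CommRing R] : Set (PrimeSpectrum R) :=
  {𝔭 | moduleDim (Localization.AtPrime 𝔭.asIdeal) (Localization.AtPrime 𝔭.asIdeal)
    ≤ (moduleDepth (Localization.AtPrime 𝔭.asIdeal) (Localization.AtPrime 𝔭.asIdeal) :
        WithBot ℕ∞)}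

/-- The `n`-th codepth locus of a module. -/
noncomputable def codepthLocus (R M : Type*) [CommRing R] [AddCommGroup M] [Module R M]
    (n : ℕ) : Set (PrimeSpectrum R) :=
  {𝔭 | moduleCodepth (Localization.AtPrime 𝔭.asIdeal)
        (LocalizedModule 𝔭.asIdeal.primeCompl M) ≤ (n : ℕ∞)}

/-- A ring is catenary if any two saturated chains of primes with the same endpoints
have the same length. -/
def IsCatenary (R : Type*) [CommRing R] : Prop :=
  ∀ c₁ c₂ : RelSeries {p : PrimeSpectrum R × PrimeSpectrum R | p.1 ⋖ p.2},
    c₁.head = c₂.head → c₁.last = c₂.last → c₁.length = c₂.length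

open Classical in
/-- The grade of an ideal `J` on a module `M`. -/
noncomputable def moduleGrade {R : Type*} (M : Type*) [CommRing R] [AddCommGroup M]
    [Module R M] (J : Ideal R) : ℕ∞ :=
  if J • (⊤ : Submodule R M) = ⊤ then ⊤
  else sSup {n : ℕ∞ | ∃ rs : List R, (rs.length : ℕ∞) = n ∧
    (∀ x ∈ rs, x ∈ J) ∧ RingTheory.Sequence.IsWeaklyRegular M rs}

/-- The Cohen–Macaulay locus of a module `M` over `R`. -/
noncomputable def cmLocus (R M : Type*) [CommRing R] [AddCommGroup M] [Module R M] :
    Set (PrimeSpectrum R) :=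
  {𝔭 | moduleDim (Localization.AtPrime 𝔭.asIdeal) (LocalizedModule 𝔭.asIdeal.primeCompl M)
    ≤ (moduleDepth (Localization.AtPrime 𝔭.asIdeal)
        (LocalizedModule 𝔭.asIdeal.primeCompl M) : WithBot ℕ∞)}

/-!
Filtering `M` by `Iⁱ M`, the associated primes of `M / Iⁿ M` lie among those of the successive
quotients `Iⁱ M / Iⁱ⁺¹ M` with `i < n`. These quotients are the graded pieces of
`gr_I M = ⊕ᵢ Iⁱ M / Iⁱ⁺¹ M`, which is a finitely generated module over the noetherian
Rees algebra `R[It]`. A finitely generated module over a noetherian `R`-algebra `S` has a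
prime filtration with factors `S / 𝔓`, and each `S / 𝔓` has at most the single associated
prime `𝔓 ∩ R` over `R`; so `gr_I M` has finitely many associated primes over `R`.
-/

open Submodule in
theorem associatedPrimes.quotient_subset_union_of_le {R W : Type*} [CommRing R]
    [AddCommGroup W] [Module R W] {A B : Submodule R W} (h : B ≤ A) :
    associatedPrimes R (W ⧸ B) ⊆
      associatedPrimes R (A ⧸ comap A.subtype B) ∪ associatedPrimes R (W ⧸ A) := by
  refine associatedPrimes.subset_union_of_exact
    (f := (comap A.subtype B).mapQ B A.subtype le_rfl) (g := B.factor h) ?_ ?_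
  · rw [← LinearMap.ker_eq_bot, mapQ]
    exact ker_liftQ_eq_bot _ _ _ (by rw [LinearMap.ker_comp, ker_mkQ])
  · rw [LinearMap.exact_iff]
    simp [factor, ker_mapQ, range_mapQ]

theorem associatedPrimes.quotient_subset_biUnion_of_antitone {R W : Type*} [CommRing R]
    [AddCommGroup W] [Module R W] {N : ℕ → Submodule R W} (hN : Antitone N) (h0 : N 0 = ⊤)
    (n : ℕ) :
    associatedPrimes R (W ⧸ N n) ⊆ ⋃ i ∈ Finset.range n,
      associatedPrimes R (N i ⧸ Submodule.comap (N i).subtype (N (i + 1))) := by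
  induction n with
  | zero =>
    have : Subsingleton (W ⧸ N 0) := Submodule.Quotient.subsingleton_iff.mpr h0
    simp [associatedPrimes.eq_empty_of_subsingleton]
  | succ n ih =>
    refine (quotient_subset_union_of_le (hN n.le_succ)).trans (Set.union_subset ?_ (ih.trans ?_))
    · exact fun _ hp => Set.mem_biUnion (Finset.self_mem_range_succ n) hp
    · exact Set.biUnion_subset_biUnion_left fun i hi => Finset.range_mono n.le_succ hi

theorem associatedPrimes.quotient_prime_subset_singleton_comap {R S : Type*} [CommRing R]
    [CommRing S] [Algebra R S] (p : Ideal S) [p.IsPrime] :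
    associatedPrimes R (S ⧸ p) ⊆ {p.comap (algebraMap R S)} := by
  rintro q ⟨hq, x, rfl⟩
  obtain ⟨x, rfl⟩ := Ideal.Quotient.mk_surjective x
  have hx : x ∉ p := fun hx => hq.ne_top <| by simp [Ideal.Quotient.eq_zero_iff_mem.mpr hx]
  have hcolon : (⊥ : Submodule R (S ⧸ p)).colon {Ideal.Quotient.mk p x} =
      p.comap (algebraMap R S) := by
    ext r
    simp [Algebra.smul_def, ← Ideal.Quotient.mk_algebraMap, Ideal.Quotient.eq_zero_iff_mem, hx]
  rw [hcolon, Ideal.IsPrime.radical inferInstance]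
  rfl

theorem associatedPrimes.finite_of_isScalarTower (R S N : Type*) [CommRing R] [CommRing S]
    [Algebra R S] [IsNoetherianRing S] [AddCommGroup N] [Module S N] [Module.Finite S N]
    [Module R N] [IsScalarTower R S N] :
    (associatedPrimes R N).Finite := by
  -- The factors of a prime filtration are only `S`-modules, so the motive quantifies over
  -- compatible `R`-structures; on the factors these are obtained by restricting scalars.
  revert ‹Module R N› ‹IsScalarTower R S N›
  refine IsNoetherianRing.induction_on_isQuotientEquivQuotientPrime S ‹_›
    (motive := fun N _ _ _ => ∀ [Module R N] [IsScalarTower R S N], (associatedPrimes R N).Finite)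
    ?_ ?_ ?_
  · intro N _ _ _ _ _ _
    simp [associatedPrimes.eq_empty_of_subsingleton]
  · intro N _ _ _ p e _ _
    rw [LinearEquiv.AssociatedPrimes.eq (e.restrictScalars R)]
    exact (Set.finite_singleton _).subset (quotient_prime_subset_singleton_comap p.asIdeal)
  · intro N₁ _ _ _ N₂ _ _ _ N₃ _ _ _ f g hf _ hfg h₁ h₃ _ _
    let _ : Module R N₁ := .compHom N₁ (algebraMap R S)
    let _ : Module R N₃ := .compHom N₃ (algebraMap R S)
    have : IsScalarTower R S N₁ := .of_algebraMap_smul fun _ _ ↦ rfl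
    have : IsScalarTower R S N₃ := .of_algebraMap_smul fun _ _ ↦ rfl
    exact (h₁.union h₃).subset (associatedPrimes.subset_union_of_exact
      (f := f.restrictScalars R) (g := g.restrictScalars R) hf hfg)

namespace Ideal.Filtration

variable {R M : Type*} [CommRing R] [AddCommGroup M] [Module R M] {I : Ideal R}
  (F : I.Filtration M)

@[simps]
def shift : I.Filtration M where
  N i := F.N (i + 1)
  mono i := F.mono (i + 1)
  smul_le i := F.smul_le (i + 1)

/-- The associated graded module `⊕ᵢ F.N i / F.N (i + 1)` over the Rees algebra, realised as the
image of `F.submodule` in `M[X] ⧸ F.shift.submodule`. -/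
noncomputable def associatedGraded :
    Submodule (reesAlgebra I) (PolynomialModule R M ⧸ F.shift.submodule) :=
  F.submodule.map F.shift.submodule.mkQ

theorem single_mem_submodule {i : ℕ} {m : M} (hm : m ∈ F.N i) :
    PolynomialModule.single R i m ∈ F.submodule := by
  intro j
  rw [PolynomialModule.coeff_single, Finsupp.single_apply]
  split_ifs with h
  · exact h ▸ hm
  · exact zero_mem _

theorem single_mem_shift_submodule_iff (i : ℕ) (m : M) :
    PolynomialModule.single R i m ∈ F.shift.submodule ↔ m ∈ F.N (i + 1) :=
  ⟨fun h => by simpa using h i, F.shift.single_mem_submodule⟩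

noncomputable def toAssociatedGraded (i : ℕ) : F.N i →ₗ[R] F.associatedGraded where
  toFun m := ⟨F.shift.submodule.mkQ (PolynomialModule.single R i m),
    Submodule.mem_map_of_mem (F.single_mem_submodule m.2)⟩
  map_add' m m' := by ext1; simp
  map_smul' r m := by ext1; simp [PolynomialModule.single_smul]

theorem ker_toAssociatedGraded (i : ℕ) :
    LinearMap.ker (F.toAssociatedGraded i) = Submodule.comap (F.N i).subtype (F.N (i + 1)) := by
  ext m
  simp only [LinearMap.mem_ker, toAssociatedGraded, LinearMap.coe_mk, AddHom.coe_mk,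
    Submodule.mk_eq_zero, Submodule.mkQ_apply, Submodule.Quotient.mk_eq_zero,
    single_mem_shift_submodule_iff, Submodule.mem_comap, Submodule.coe_subtype]

theorem Stable.finite_iUnion_associatedPrimes [IsNoetherianRing R] [Module.Finite R M]
    {F : I.Filtration M} (hF : F.Stable) :
    (⋃ i, associatedPrimes R (F.N i ⧸ Submodule.comap (F.N i).subtype (F.N (i + 1)))).Finite :=
    by
  have hfg : F.submodule.FG :=
    (F.submodule_fg_iff_stable fun _ => IsNoetherian.noetherian _).mpr hF
  have : Module.Finite (reesAlgebra I) F.associatedGraded := Module.Finite.iff_fg.mpr (hfg.map _)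
  refine (associatedPrimes.finite_of_isScalarTower R (reesAlgebra I) F.associatedGraded).subset
    (Set.iUnion_subset fun i => ?_)
  exact associatedPrimes.subset_of_injective <| LinearMap.ker_eq_bot.mp <|
    Submodule.ker_liftQ_eq_bot' _ _ (F.ker_toAssociatedGraded i).symm

end Ideal.Filtration

theorem stmt19 (R M : Type*) [CommRing R] [IsNoetherianRing R]
    [AddCommGroup M] [Module R M] [Module.Finite R M] (I : Ideal R) :
    Set.Finite {𝔭 : Ideal R | ∃ n : ℕ, 0 < n ∧
      𝔭 ∈ associatedPrimes R (M ⧸ (I ^ n • ⊤ : Submodule R M))} ∧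
    (∀ n : ℕ, 0 < n → associatedPrimes R (M ⧸ (I ^ n • ⊤ : Submodule R M)) ⊆
      ⋃ i ∈ Finset.range n, associatedPrimes R
        ((I ^ i • ⊤ : Submodule R M) ⧸
          Submodule.comap (I ^ i • ⊤ : Submodule R M).subtype
            (I ^ (i + 1) • ⊤ : Submodule R M))) ∧
    Set.Finite {𝔭 : Ideal R | ∃ i : ℕ,
      𝔭 ∈ associatedPrimes R
        ((I ^ i • ⊤ : Submodule R M) ⧸
          Submodule.comap (I ^ i • ⊤ : Submodule R M).subtype
            (I ^ (i + 1) • ⊤ : Submodule R M))} := by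
  have hgr := (I.stableFiltration_stable (⊤ : Submodule R M)).finite_iUnion_associatedPrimes
  have hquot (n : ℕ) := associatedPrimes.quotient_subset_biUnion_of_antitone
    (I.stableFiltration (⊤ : Submodule R M)).antitone (by simp) n
  refine ⟨hgr.subset ?_, fun n _ => hquot n,
    hgr.subset fun _ ⟨i, hi⟩ => Set.mem_iUnion_of_mem i hi⟩
  rintro p ⟨n, -, hp⟩
  obtain ⟨i, -, hi⟩ := Set.mem_iUnion₂.mp (hquot n hp)
  exact Set.mem_iUnion_of_mem i hi
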